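/- arXiv:2503.12110 — 4 statements merged into one kernel-verified Lean document; each statement's English description precedes it below -/
import Mathlib

section
/- Let I be a finite index set, let x : I → ℝ^d, let β : I × I → ℝ satisfy β_{ij} = β_{ji} for all i, j, and let m : I × I → ℝ^d satisfy m_{ij} = m_{ji} for all i, j. Then for any scalar fields f, g : I → ℝ the discrete integration-by-parts identity holds: Σ_i Σ_{j ≠ i} β_{ij} (f_i − f_j) g_i (m_{ij} − x_i) = Σ_i Σ_{j ≠ i} β_{ij} f_i [ g_i (m_{ij} − x_i) − g_j (m_{ij} − x_j) ] (an identity of vectors in ℝ^d). Equivalently, with cell volumes V_i > 0 and the operators ⟨∇f⟩_i = −(1/V_i) Σ_{j≠i} β_{ij} (f_i − f_j)(m_{ij} − x_i) and ⟨∇*g⟩_i = (1/V_i) Σ_{j≠i} β_{ij} [g_i(m_{ij} − x_i) − g_j(m_{ij} − x_j)], one has Σ_i V_i g_i ⟨∇f⟩_i = −Σ_i V_i f_i ⟨∇*g⟩_i. -/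
open Finset

/-- Primal discrete gradient `⟨∇f⟩_i = −(1/V_i) Σ_{j≠i} β_{ij} (f_i − f_j)(m_{ij} − x_i)`. -/
noncomputable def primalGrad {d : ℕ} {I : Type*} [Fintype I] [DecidableEq I]
    (x : I → EuclideanSpace ℝ (Fin d)) (β : I → I → ℝ) (m : I → I → EuclideanSpace ℝ (Fin d))
    (V : I → ℝ) (f : I → ℝ) (i : I) : EuclideanSpace ℝ (Fin d) :=
  (-(V i)⁻¹) • ∑ j ∈ Finset.univ.erase i, (β i j * (f i - f j)) • (m i j - x i)

/-- Dual discrete gradient `⟨∇*g⟩_i = (1/V_i) Σ_{j≠i} β_{ij} [g_i(m_{ij} − x_i) − g_j(m_{ij} − x_j)]`. -/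
noncomputable def dualGrad {d : ℕ} {I : Type*} [Fintype I] [DecidableEq I]
    (x : I → EuclideanSpace ℝ (Fin d)) (β : I → I → ℝ) (m : I → I → EuclideanSpace ℝ (Fin d))
    (V : I → ℝ) (g : I → ℝ) (i : I) : EuclideanSpace ℝ (Fin d) :=
  (V i)⁻¹ • ∑ j ∈ Finset.univ.erase i, β i j • (g i • (m i j - x i) - g j • (m i j - x j))

private lemma swap_sum {I : Type*} [Fintype I] [DecidableEq I] {E : Type*} [AddCommMonoid E]
    (F : I → I → E) :
    ∑ i : I, ∑ j ∈ Finset.univ.erase i, F i j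
      = ∑ i : I, ∑ j ∈ Finset.univ.erase i, F j i := by
  exact Finset.sum_comm' (by intro a b; simp [ne_comm, and_comm])

/-- Discrete integration by parts for the primal/dual Voronoi gradients. -/
theorem discrete_integration_by_parts {d : ℕ} {I : Type*} [Fintype I] [DecidableEq I]
    (x : I → EuclideanSpace ℝ (Fin d)) (β : I → I → ℝ) (m : I → I → EuclideanSpace ℝ (Fin d))
    (hβ : ∀ i j, β i j = β j i) (hm : ∀ i j, m i j = m j i)
    (V : I → ℝ) (hV : ∀ i, 0 < V i) (f g : I → ℝ) :
    (∑ i : I, ∑ j ∈ Finset.univ.erase i,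
        (β i j * (f i - f j) * g i) • (m i j - x i) =
      ∑ i : I, ∑ j ∈ Finset.univ.erase i,
        (β i j * f i) • (g i • (m i j - x i) - g j • (m i j - x j))) ∧
    ∑ i : I, (V i * g i) • primalGrad x β m V f i =
      -∑ i : I, (V i * f i) • dualGrad x β m V g i := by
  have key : ∑ i : I, ∑ j ∈ Finset.univ.erase i,
        (β i j * (f i - f j) * g i) • (m i j - x i) =
      ∑ i : I, ∑ j ∈ Finset.univ.erase i,
        (β i j * f i) • (g i • (m i j - x i) - g j • (m i j - x j)) := by
    have hswap : ∑ i : I, ∑ j ∈ Finset.univ.erase i,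
        (β i j * f i * g j) • (m i j - x j)
        = ∑ i : I, ∑ j ∈ Finset.univ.erase i, (β i j * f j * g i) • (m i j - x i) := by
      rw [swap_sum (fun i j => (β i j * f i * g j) • (m i j - x j))]
      refine Finset.sum_congr rfl fun i _ => Finset.sum_congr rfl fun j _ => ?_
      rw [hβ j i, hm j i]
    calc ∑ i : I, ∑ j ∈ Finset.univ.erase i, (β i j * (f i - f j) * g i) • (m i j - x i)
        = ∑ i : I, ∑ j ∈ Finset.univ.erase i,
            ((β i j * f i * g i) • (m i j - x i) - (β i j * f j * g i) • (m i j - x i)) := by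
          refine Finset.sum_congr rfl fun i _ => Finset.sum_congr rfl fun j _ => ?_
          rw [← sub_smul]; ring_nf
      _ = ∑ i : I, ∑ j ∈ Finset.univ.erase i,
            ((β i j * f i * g i) • (m i j - x i) - (β i j * f i * g j) • (m i j - x j)) := by
          simp only [Finset.sum_sub_distrib, hswap]
      _ = _ := by
          refine Finset.sum_congr rfl fun i _ => Finset.sum_congr rfl fun j _ => ?_
          module
  refine ⟨key, ?_⟩
  have hVne : ∀ i, V i ≠ 0 := fun i => (hV i).ne'
  calc ∑ i : I, (V i * g i) • primalGrad x β m V f i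
      = -∑ i : I, ∑ j ∈ Finset.univ.erase i,
          (β i j * (f i - f j) * g i) • (m i j - x i) := by
        rw [← Finset.sum_neg_distrib]
        refine Finset.sum_congr rfl fun i _ => ?_
        rw [primalGrad, smul_smul]
        have hc : V i * g i * -(V i)⁻¹ = -(g i) := by field_simp [hVne i]
        rw [hc, neg_smul, Finset.smul_sum]
        congr 1
        refine Finset.sum_congr rfl fun j _ => ?_
        rw [smul_smul]
        congr 1
        ring
    _ = -∑ i : I, (V i * f i) • dualGrad x β m V g i := by
        rw [key]
        congr 1
        refine Finset.sum_congr rfl fun i _ => ?_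
        rw [dualGrad, smul_smul]
        have hc : V i * f i * (V i)⁻¹ = f i := by field_simp [hVne i]
        rw [hc, Finset.smul_sum]
        refine Finset.sum_congr rfl fun j _ => ?_
        rw [smul_smul, mul_comm]
end

section
/- Let I be a finite index set, x : I → ℝ^d, β : I × I → ℝ symmetric (β_{ij} = β_{ji}), m : I × I → ℝ^d symmetric (m_{ij} = m_{ji}), and V : I → ℝ positive. For a field of d×d matrices T : I → M_d(ℝ) define the discrete tensor divergence ⟨div T⟩_i = −(1/V_i) Σ_{j≠i} β_{ij} (T_i − T_j)(m_{ij} − x_i) ∈ ℝ^d, and for a vector field v : I → ℝ^d define the dual discrete velocity gradient ⟨∇*v⟩_i = (1/V_i) Σ_{j≠i} β_{ij} [ v_i ⊗ (m_{ij} − x_i) − v_j ⊗ (m_{ij} − x_j) ] ∈ M_d(ℝ). Then the total-energy compatibility identity holds: Σ_i V_i ( ⟨div T⟩_i · v_i + T_i : ⟨∇*v⟩_i ) = 0, where A : B denotes the Frobenius inner product of matrices. -/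
open Finset Matrix

/-- Discrete divergence of a matrix (stress) field:
`⟨div T⟩_i = −(1/V_i) Σ_{j≠i} β_{ij} (T_i − T_j)(m_{ij} − x_i)`. -/
noncomputable def discreteTensorDiv {d : ℕ} {I : Type*} [Fintype I] [DecidableEq I]
    (x : I → EuclideanSpace ℝ (Fin d)) (β : I → I → ℝ) (m : I → I → EuclideanSpace ℝ (Fin d))
    (V : I → ℝ) (T : I → Matrix (Fin d) (Fin d) ℝ) (i : I) : Fin d → ℝ :=
  (-(V i)⁻¹) • ∑ j ∈ Finset.univ.erase i, β i j • ((T i - T j) *ᵥ (fun k => m i j k - x i k))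

/-- Dual discrete velocity gradient
`⟨∇*v⟩_i = (1/V_i) Σ_{j≠i} β_{ij} [v_i ⊗ (m_{ij} − x_i) − v_j ⊗ (m_{ij} − x_j)]`. -/
noncomputable def dualVelGrad {d : ℕ} {I : Type*} [Fintype I] [DecidableEq I]
    (x : I → EuclideanSpace ℝ (Fin d)) (β : I → I → ℝ) (m : I → I → EuclideanSpace ℝ (Fin d))
    (V : I → ℝ) (v : I → EuclideanSpace ℝ (Fin d)) (i : I) : Matrix (Fin d) (Fin d) ℝ :=
  (V i)⁻¹ • ∑ j ∈ Finset.univ.erase i, β i j •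
    (Matrix.vecMulVec (fun k => v i k) (fun k => m i j k - x i k) -
     Matrix.vecMulVec (fun k => v j k) (fun k => m i j k - x j k))

private lemma sum_rot3' {A B C M : Type*} [AddCommMonoid M] (sA : Finset A) (sB : Finset B)
    (sC : Finset C) (f : A → B → C → M) :
    ∑ a ∈ sA, ∑ b ∈ sB, ∑ c ∈ sC, f a b c = ∑ c ∈ sC, ∑ a ∈ sA, ∑ b ∈ sB, f a b c := by
  calc ∑ a ∈ sA, ∑ b ∈ sB, ∑ c ∈ sC, f a b c
      = ∑ a ∈ sA, ∑ c ∈ sC, ∑ b ∈ sB, f a b c :=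
        Finset.sum_congr rfl fun a _ => Finset.sum_comm
    _ = ∑ c ∈ sC, ∑ a ∈ sA, ∑ b ∈ sB, f a b c := Finset.sum_comm

/-- Total-energy compatibility: `Σ_i V_i (⟨div T⟩_i · v_i + T_i : ⟨∇*v⟩_i) = 0`,
where `:` denotes the Frobenius inner product. -/
theorem total_energy_compatibility {d : ℕ} {I : Type*} [Fintype I] [DecidableEq I]
    (x : I → EuclideanSpace ℝ (Fin d)) (β : I → I → ℝ) (m : I → I → EuclideanSpace ℝ (Fin d))
    (hβ : ∀ i j, β i j = β j i) (hm : ∀ i j, m i j = m j i)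
    (V : I → ℝ) (hV : ∀ i, 0 < V i)
    (T : I → Matrix (Fin d) (Fin d) ℝ) (v : I → EuclideanSpace ℝ (Fin d)) :
    ∑ i : I, V i *
        ((∑ k, discreteTensorDiv x β m V T i k * v i k) +
          ∑ k, ∑ l, T i k l * dualVelGrad x β m V v i k l) = 0 := by
  set g : I → I → ℝ := fun i j => β i j *
      ((∑ k, ∑ l, T j k l * (m i j l - x i l) * v i k) -
       ∑ k, ∑ l, T i k l * (m i j l - x j l) * v j k) with hg
  have key : ∀ i, V i *
        ((∑ k, discreteTensorDiv x β m V T i k * v i k) +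
          ∑ k, ∑ l, T i k l * dualVelGrad x β m V v i k l)
      = ∑ j ∈ Finset.univ.erase i, g i j := by
    intro i
    have hVi : (V i : ℝ) ≠ 0 := (hV i).ne'
    simp only [discreteTensorDiv, dualVelGrad, Pi.smul_apply, Finset.sum_apply,
      Matrix.smul_apply, Matrix.sum_apply, Matrix.sub_apply, Matrix.vecMulVec_apply,
      Matrix.mulVec, dotProduct, smul_eq_mul, Finset.mul_sum, Finset.sum_mul, neg_mul]
    rw [show (∑ k : Fin d, ∑ j ∈ Finset.univ.erase i, ∑ l : Fin d,
          -((V i)⁻¹ * (β i j * ((T i k l - T j k l) * (m i j l - x i l))) * v i k)) =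
        ∑ j ∈ Finset.univ.erase i, ∑ k : Fin d, ∑ l : Fin d,
          -((V i)⁻¹ * (β i j * ((T i k l - T j k l) * (m i j l - x i l))) * v i k) from
        Finset.sum_comm,
      sum_rot3' (univ : Finset (Fin d)) (univ : Finset (Fin d)) (Finset.univ.erase i)
        (fun k l j => T i k l *
          ((V i)⁻¹ * (β i j * (v i k * (m i j l - x i l) - v j k * (m i j l - x j l))))),
      ← Finset.sum_add_distrib, Finset.mul_sum]
    refine Finset.sum_congr rfl fun j _ => ?_
    rw [hg]
    simp only [mul_sub, Finset.mul_sum]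
    rw [← Finset.sum_sub_distrib, ← Finset.sum_add_distrib, Finset.mul_sum]
    refine Finset.sum_congr rfl fun k _ => ?_
    rw [← Finset.sum_sub_distrib, ← Finset.sum_add_distrib, Finset.mul_sum]
    refine Finset.sum_congr rfl fun l _ => ?_
    field_simp
    ring
  have hanti : ∀ i j, g j i = - g i j := by
    intro i j
    rw [hg]
    simp only
    rw [hβ j i, hm j i]
    ring
  simp only [key]
  have hswap : ∑ i : I, ∑ j ∈ Finset.univ.erase i, g i j
      = ∑ j : I, ∑ i ∈ Finset.univ.erase j, g i j := by
    refine Finset.sum_comm' ?_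
    intro a b
    simp [Finset.mem_erase, eq_comm]
  have hneg : ∑ j : I, ∑ i ∈ Finset.univ.erase j, g i j
      = - ∑ i : I, ∑ j ∈ Finset.univ.erase i, g i j := by
    rw [← Finset.sum_neg_distrib]
    refine Finset.sum_congr rfl fun j _ => ?_
    rw [← Finset.sum_neg_distrib]
    exact Finset.sum_congr rfl fun i _ => by rw [hanti]
  have := hswap.trans hneg
  linarith
end

section
/- Let I be a finite index set, x : I → ℝ^d, β : I × I → ℝ symmetric (β_{ij} = β_{ji}), and m : I × I → ℝ^d symmetric (m_{ij} = m_{ji}). Assume that for every i the closedness condition Σ_{j≠i} β_{ij} (x_j − x_i) = 0 holds (discretely, ⟨∇*1⟩_i = 0 for every cell). Then for any field of d×d matrices T : I → M_d(ℝ), the total discrete force vanishes: Σ_i Σ_{j≠i} β_{ij} (T_i − T_j)(m_{ij} − x_i) = 0, i.e., Σ_i V_i ⟨div T⟩_i = 0 for any positive volumes V_i, so the semi-discrete scheme conserves linear momentum. -/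
/-! With `g_ij = β_ij T_i (m_ij − x_j)`, the symmetry of `β` and `m` gives
`β_ij (T_i − T_j)(m_ij − x_i) = (g_ij − g_ji) + T_i (β_ij (x_j − x_i))`.
The antisymmetric part cancels when summed over all ordered pairs `i ≠ j`, and what is left is
`Σ_i T_i (Σ_{j≠i} β_ij (x_j − x_i))`, which vanishes by the closedness condition. -/

open Finset Matrix

section OffDiagonalSums

variable {I M : Type*} [Fintype I] [DecidableEq I]

lemma sum_sum_erase_comm [AddCommMonoid M] (f : I → I → M) :
    ∑ i, ∑ j ∈ univ.erase i, f i j = ∑ i, ∑ j ∈ univ.erase i, f j i :=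
  sum_comm' fun i j => by simp [ne_comm]

lemma sum_sum_erase_sub_swap [AddCommGroup M] (f : I → I → M) :
    ∑ i, ∑ j ∈ univ.erase i, (f i j - f j i) = 0 := by
  simp only [sum_sub_distrib]
  rw [sum_sum_erase_comm f, sub_self]

end OffDiagonalSums

lemma smul_sub_apply_eq_antisymm_add {R E F : Type*} [Ring R] [AddCommGroup E] [Module R E]
    [AddCommGroup F] [Module R F] (β : R) (A B : E →ₗ[R] F) (m xi xj : E) :
    β • (A - B) (m - xi) = (β • A (m - xj) - β • B (m - xi)) + A (β • (xj - xi)) := by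
  simp only [LinearMap.sub_apply, map_sub, map_smul, smul_sub]
  abel

theorem sum_sum_erase_smul_sub_apply_eq_zero {I R E F : Type*} [Fintype I] [DecidableEq I]
    [Ring R] [AddCommGroup E] [Module R E] [AddCommGroup F] [Module R F]
    (x : I → E) (β : I → I → R) (m : I → I → E)
    (hβ : ∀ i j, β i j = β j i) (hm : ∀ i j, m i j = m j i)
    (hclosed : ∀ i, ∑ j ∈ univ.erase i, β i j • (x j - x i) = 0) (T : I → E →ₗ[R] F) :
    ∑ i, ∑ j ∈ univ.erase i, β i j • (T i - T j) (m i j - x i) = 0 := by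
  let g i j := β i j • T i (m i j - x j)
  calc ∑ i, ∑ j ∈ univ.erase i, β i j • (T i - T j) (m i j - x i)
      = ∑ i, ∑ j ∈ univ.erase i, ((g i j - g j i) + T i (β i j • (x j - x i))) := by
        refine sum_congr rfl fun i _ => sum_congr rfl fun j _ => ?_
        rw [smul_sub_apply_eq_antisymm_add _ _ _ _ _ (x j)]
        simp only [g, hβ j i, hm j i]
    _ = ∑ i, T i (∑ j ∈ univ.erase i, β i j • (x j - x i)) := by
        simp only [sum_add_distrib, sum_sum_erase_sub_swap g, zero_add, map_sum]
    _ = 0 := by simp [hclosed]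

lemma smul_discreteTensorDiv {d : ℕ} {I : Type*} [Fintype I] [DecidableEq I]
    (x : I → EuclideanSpace ℝ (Fin d)) (β : I → I → ℝ) (m : I → I → EuclideanSpace ℝ (Fin d))
    (V : I → ℝ) (T : I → Matrix (Fin d) (Fin d) ℝ) (i : I) (hV : V i ≠ 0) :
    V i • discreteTensorDiv x β m V T i =
      -∑ j ∈ univ.erase i, β i j • ((T i - T j) *ᵥ (fun k => m i j k - x i k)) := by
  rw [discreteTensorDiv, smul_smul, mul_neg, mul_inv_cancel₀ hV, neg_one_smul]

/-- If every cell satisfies the closedness condition `Σ_{j≠i} β_{ij}(x_j − x_i) = 0`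
(i.e. `⟨∇*1⟩_i = 0`), then the total discrete force vanishes for any matrix field `T`
and any positive volumes: the semi-discrete scheme conserves linear momentum. -/
theorem total_discrete_force_vanishes {d : ℕ} {I : Type*} [Fintype I] [DecidableEq I]
    (x : I → EuclideanSpace ℝ (Fin d)) (β : I → I → ℝ) (m : I → I → EuclideanSpace ℝ (Fin d))
    (hβ : ∀ i j, β i j = β j i) (hm : ∀ i j, m i j = m j i)
    (hclosed : ∀ i : I, ∑ j ∈ Finset.univ.erase i, β i j • (x j - x i) = 0)
    (T : I → Matrix (Fin d) (Fin d) ℝ) :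
    (∑ i : I, ∑ j ∈ Finset.univ.erase i,
        β i j • ((T i - T j) *ᵥ (fun k => m i j k - x i k)) = 0) ∧
    ∀ V : I → ℝ, (∀ i, 0 < V i) →
      ∑ i : I, V i • discreteTensorDiv x β m V T i = 0 := by
  let L i : EuclideanSpace ℝ (Fin d) →ₗ[ℝ] Fin d → ℝ :=
    (T i).mulVecLin ∘ₗ (WithLp.linearEquiv 2 ℝ (Fin d → ℝ)).toLinearMap
  have hforce :
      ∑ i, ∑ j ∈ univ.erase i, β i j • ((T i - T j) *ᵥ (fun k => m i j k - x i k)) = 0 := by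
    rw [← sum_sum_erase_smul_sub_apply_eq_zero x β m hβ hm hclosed L]
    refine sum_congr rfl fun i _ => sum_congr rfl fun j _ => ?_
    rw [sub_mulVec, LinearMap.sub_apply]
    rfl
  refine ⟨hforce, fun V hV => ?_⟩
  rw [sum_congr rfl fun i _ => smul_discreteTensorDiv x β m V T i (hV i).ne', sum_neg_distrib,
    hforce, neg_zero]
end

section
/- Let ρ > 0 be a constant and let a, b, ξ : ℝ → ℝ be differentiable functions with a(t) > 0 and b(t) > 0 for all t, satisfying the circular-patch ODE system a' = −ξ a, b' = ξ b, ξ' = ξ² (a² − b²)/(a² + b²). Define the velocity field v(t, (x, y)) = (−ξ(t) x, ξ(t) y) and the pressure p(t, (x, y)) = −(ξ(t)² ρ / (1/a(t)² + 1/b(t)²)) ((x/a(t))² + (y/b(t))² − 1). Then v and p solve the incompressible Euler equations at every (t, x, y) ∈ ℝ × ℝ²: ∂v/∂t + (v · ∇)v = −(1/ρ) ∇p and div v = 0; moreover p(t, ·) vanishes on the ellipse {(x, y) : (x/a(t))² + (y/b(t))² = 1}. -/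
/-- The circular-patch pressure
`p(t,x,y) = −(ξ(t)² ρ / (1/a(t)² + 1/b(t)²)) ((x/a(t))² + (y/b(t))² − 1)`. -/
noncomputable def cpPressure (ρ : ℝ) (a b ξ : ℝ → ℝ) (t x y : ℝ) : ℝ :=
  -(ξ t ^ 2 * ρ / (1 / a t ^ 2 + 1 / b t ^ 2)) * ((x / a t) ^ 2 + (y / b t) ^ 2 - 1)

/-- Derivative of the pressure in the first space variable. -/
lemma cpPressure_deriv_x (ρ : ℝ) (a b ξ : ℝ → ℝ) (t x y : ℝ) :
    deriv (fun x' => cpPressure ρ a b ξ t x' y) x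
      = -(ξ t ^ 2 * ρ / (1 / a t ^ 2 + 1 / b t ^ 2)) * (2 * (x / a t) * (1 / a t)) := by
  have h : HasDerivAt (fun x' : ℝ => (x' / a t) ^ 2 + (y / b t) ^ 2 - 1)
      (2 * (x / a t) ^ 1 * (1 / a t)) x := by
    have := ((hasDerivAt_id x).div_const (a t)).pow 2
    simpa using (this.add_const ((y / b t) ^ 2)).sub_const 1
  have h2 := h.const_mul (-(ξ t ^ 2 * ρ / (1 / a t ^ 2 + 1 / b t ^ 2)))
  simpa [cpPressure] using h2.deriv

/-- Derivative of the pressure in the second space variable. -/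
lemma cpPressure_deriv_y (ρ : ℝ) (a b ξ : ℝ → ℝ) (t x y : ℝ) :
    deriv (fun y' => cpPressure ρ a b ξ t x y') y
      = -(ξ t ^ 2 * ρ / (1 / a t ^ 2 + 1 / b t ^ 2)) * (2 * (y / b t) * (1 / b t)) := by
  have h : HasDerivAt (fun y' : ℝ => (x / a t) ^ 2 + (y' / b t) ^ 2 - 1)
      (2 * (y / b t) ^ 1 * (1 / b t)) y := by
    have := ((hasDerivAt_id y).div_const (b t)).pow 2
    simpa using (this.const_add ((x / a t) ^ 2)).sub_const 1
  have h2 := h.const_mul (-(ξ t ^ 2 * ρ / (1 / a t ^ 2 + 1 / b t ^ 2)))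
  simpa [cpPressure] using h2.deriv

/-- The circular-patch velocity `v(t,(x,y)) = (−ξ(t)x, ξ(t)y)` together with the
pressure `cpPressure` solves the incompressible Euler equations
`∂v/∂t + (v·∇)v = −(1/ρ)∇p`, `div v = 0`, and the pressure vanishes on the ellipse
`(x/a)² + (y/b)² = 1`. -/
theorem circular_patch_solves_euler (ρ : ℝ) (hρ : 0 < ρ)
    (a b ξ : ℝ → ℝ)
    (ha : Differentiable ℝ a) (hb : Differentiable ℝ b) (hξ : Differentiable ℝ ξ)
    (hapos : ∀ t, 0 < a t) (hbpos : ∀ t, 0 < b t)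
    (hODEa : ∀ t, deriv a t = -ξ t * a t)
    (hODEb : ∀ t, deriv b t = ξ t * b t)
    (hODEξ : ∀ t, deriv ξ t = ξ t ^ 2 * (a t ^ 2 - b t ^ 2) / (a t ^ 2 + b t ^ 2)) :
    (∀ t x y : ℝ,
        deriv (fun s => -ξ s * x) t
          + (-ξ t * x) * deriv (fun x' => -ξ t * x') x
          + (ξ t * y) * deriv (fun y' => -ξ t * x) y
        = -(1 / ρ) * deriv (fun x' => cpPressure ρ a b ξ t x' y) x) ∧
    (∀ t x y : ℝ,
        deriv (fun s => ξ s * y) t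
          + (-ξ t * x) * deriv (fun x' => ξ t * y) x
          + (ξ t * y) * deriv (fun y' => ξ t * y') y
        = -(1 / ρ) * deriv (fun y' => cpPressure ρ a b ξ t x y') y) ∧
    (∀ t x y : ℝ,
        deriv (fun x' => -ξ t * x') x + deriv (fun y' => ξ t * y') y = 0) ∧
    (∀ t x y : ℝ, (x / a t) ^ 2 + (y / b t) ^ 2 = 1 → cpPressure ρ a b ξ t x y = 0) := by
  have hρ' : ρ ≠ 0 := ne_of_gt hρ
  refine ⟨?_, ?_, ?_, ?_⟩
  · intro t x y
    have ha0 : a t ≠ 0 := ne_of_gt (hapos t)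
    have hb0 : b t ≠ 0 := ne_of_gt (hbpos t)
    have hab : a t ^ 2 + b t ^ 2 ≠ 0 := by positivity
    have hdt : deriv (fun s => -ξ s * x) t = -(deriv ξ t) * x := by
      have : HasDerivAt (fun s => -ξ s * x) (-(deriv ξ t) * x) t :=
        ((hξ t).hasDerivAt.neg).mul_const x
      exact this.deriv
    have hdx : deriv (fun x' : ℝ => -ξ t * x') x = -ξ t := by
      simpa using (hasDerivAt_id x).const_mul (-ξ t) |>.deriv
    rw [hdt, hdx, cpPressure_deriv_x, hODEξ t]
    simp only [deriv_const]
    field_simp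
    ring
  · intro t x y
    have ha0 : a t ≠ 0 := ne_of_gt (hapos t)
    have hb0 : b t ≠ 0 := ne_of_gt (hbpos t)
    have hab : a t ^ 2 + b t ^ 2 ≠ 0 := by positivity
    have hdt : deriv (fun s => ξ s * y) t = deriv ξ t * y :=
      ((hξ t).hasDerivAt.mul_const y).deriv
    have hdy : deriv (fun y' : ℝ => ξ t * y') y = ξ t := by
      simpa using (hasDerivAt_id y).const_mul (ξ t) |>.deriv
    rw [hdt, hdy, cpPressure_deriv_y, hODEξ t]
    simp only [deriv_const]
    field_simp
    ring
  · intro t x y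
    have hdx : deriv (fun x' : ℝ => -ξ t * x') x = -ξ t := by
      simpa using (hasDerivAt_id x).const_mul (-ξ t) |>.deriv
    have hdy : deriv (fun y' : ℝ => ξ t * y') y = ξ t := by
      simpa using (hasDerivAt_id y).const_mul (ξ t) |>.deriv
    rw [hdx, hdy]; ring
  · intro t x y h
    simp [cpPressure, h]
end
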